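/- Let F be a field and q ∈ F with q ≠ 0. For integers k ≤ n ≤ −1 define the generalized Gaussian coefficient G(n,k) := (−1)^{n−k} · h_{n−k}(q^{−1}, q^{−2}, …, q^{n}) (the complete homogeneous symmetric function of degree n−k in the −n variables q^{−1}, q^{−2}, …, q^{n}), and set G(n,k) := 0 when k > n. Then for all integers k ≤ n ≤ −1, G(n, k) = G(n−1, k−1) + q^{n−1} · G(n−1, k). -/

import Mathlib

/-- `h_n(B)`: the complete homogeneous symmetric function of degree `n` in the
elements of the multiset `B`, defined as the coefficient of `t^n` in
`∏_{b ∈ B} (1 + b t + b² t² + ⋯) = ∏_{b ∈ B} 1/(1 - b t)`. -/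
noncomputable def hsymmM {R : Type*} [CommRing R] (B : Multiset R) (n : ℕ) : R :=
  PowerSeries.coeff (R := R) n ((B.map fun b => PowerSeries.mk fun k => b ^ k).prod)

/-- `e_k(A)`: the elementary symmetric function of degree `k` in the elements of
the multiset `A`. -/
def esymmM {R : Type*} [CommRing R] (A : Multiset R) (k : ℕ) : R :=
  ((A.powersetCard k).map Multiset.prod).sum

/-- The complementary symmetric function `comp_n(A;B) = ∑_{j=0}^n (-1)^j e_j(A) h_{n-j}(B)`. -/
noncomputable def compM {R : Type*} [CommRing R] (A B : Multiset R) (n : ℕ) : R :=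
  ∑ j ∈ Finset.range (n + 1), (-1 : R) ^ j * esymmM A j * hsymmM B (n - j)


/-- The generalized Gaussian coefficient in region 3: for `k ≤ n ≤ -1`,
`G(n,k) = (-1)^{n-k} h_{n-k}(q^{-1}, q^{-2}, …, q^{n})` (a complete homogeneous symmetric
function in the `-n` variables `q^{-1}, …, q^{n}`), and `G(n,k) = 0` for `k > n`. -/
noncomputable def Gq {F : Type*} [Field F] (q : F) (n k : ℤ) : F :=
  if k ≤ n then
    (-1) ^ (n - k).toNat *
      hsymmM ((Multiset.range (-n).toNat).map fun j => q ^ (-(j : ℤ) - 1)) (n - k).toNat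
  else 0

/-! The recursion comes from peeling the new variable `q^{n-1}` off `h_{n-k}(q^{-1}, …, q^{n-1})`:
since `∏ 1/(1 - b t)` gains the factor `1/(1 - a t)` when `a` is adjoined, `h_{m+1}(a, B) =
h_{m+1}(B) + a h_m(a, B)`. -/

namespace PowerSeries

theorem mk_pow_eq_one_add {R : Type*} [CommRing R] (a : R) :
    (mk fun k => a ^ k) = 1 + C a * X * mk fun k => a ^ k := by
  ext (_ | m)
  · simp
  · rw [map_add, mul_assoc, coeff_C_mul, coeff_succ_X_mul]
    simp [pow_succ, mul_comm]

end PowerSeries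

section hsymmM

variable {R : Type*} [CommRing R]

theorem hsymmM_zero (B : Multiset R) : hsymmM B 0 = 1 := by
  simp [hsymmM, PowerSeries.coeff_zero_eq_constantCoeff, map_multiset_prod, Function.comp_def]

theorem hsymmM_cons_succ (a : R) (B : Multiset R) (m : ℕ) :
    hsymmM (a ::ₘ B) (m + 1) = hsymmM B (m + 1) + a * hsymmM (a ::ₘ B) m := by
  unfold hsymmM
  rw [Multiset.map_cons, Multiset.prod_cons]
  conv_lhs => rw [PowerSeries.mk_pow_eq_one_add a, add_mul, one_mul, map_add]
  rw [mul_assoc, mul_assoc, PowerSeries.coeff_C_mul, PowerSeries.coeff_succ_X_mul]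

end hsymmM

section Gq

variable {F : Type*} [Field F] (q : F)

/-- The variables `q^{-1}, q^{-2}, …, q^{n}` of `G(n, ·)`. In `Gq` the index multiset
`Multiset.range (-n).toNat` is coerced to `Multiset ℤ` through the monad structure;
`Gq_of_le` removes that coercion. -/
noncomputable def gaussVars (n : ℤ) : Multiset F :=
  (Multiset.range (-n).toNat).map fun j : ℕ => q ^ (-(j : ℤ) - 1)

theorem gaussVars_sub_one {n : ℤ} (hn : n ≤ 0) :
    gaussVars q (n - 1) = q ^ (n - 1) ::ₘ gaussVars q n := by
  have hlen : (-(n - 1)).toNat = (-n).toNat + 1 := by omega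
  have hexp : -(((-n).toNat : ℕ) : ℤ) - 1 = n - 1 := by omega
  rw [gaussVars, gaussVars, hlen, Multiset.range_succ, Multiset.map_cons, hexp]

theorem Gq_of_le {n k : ℤ} (hk : k ≤ n) :
    Gq q n k = (-1) ^ (n - k).toNat * hsymmM (gaussVars q n) (n - k).toNat := by
  rw [Gq, if_pos hk, gaussVars, bind_pure_comp, Multiset.fmap_def, Multiset.map_map]
  rfl

theorem Gq_of_lt {n k : ℤ} (hk : n < k) : Gq q n k = 0 := by
  rw [Gq, if_neg hk.not_ge]

theorem Gq_self (n : ℤ) : Gq q n n = 1 := by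
  simp [Gq_of_le, hsymmM_zero]

end Gq

theorem stmt16_general {F : Type*} [Field F] (q : F) (n k : ℤ)
    (hk : k ≤ n) (hn : n ≤ -1) :
    Gq q n k = Gq q (n - 1) (k - 1) + q ^ (n - 1) * Gq q (n - 1) k := by
  rcases hk.eq_or_lt with rfl | hlt
  · simp [Gq_self, Gq_of_lt q (sub_one_lt k)]
  obtain ⟨m, hm⟩ : ∃ m : ℕ, (n - k).toNat = m + 1 := ⟨(n - k).toNat - 1, by omega⟩
  rw [Gq_of_le q hk, Gq_of_le q (by omega : k - 1 ≤ n - 1), Gq_of_le q (by omega : k ≤ n - 1),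
    show (n - 1 - (k - 1)).toNat = m + 1 by omega, show (n - 1 - k).toNat = m by omega, hm,
    gaussVars_sub_one q (by omega), hsymmM_cons_succ]
  ring

/-- The Gaussian recursion `G(n,k) = G(n-1,k-1) + q^{n-1} G(n-1,k)` in region 3. -/
theorem stmt16 {F : Type*} [Field F] (q : F) (hq : q ≠ 0) (n k : ℤ)
    (hk : k ≤ n) (hn : n ≤ -1) :
    Gq q n k = Gq q (n - 1) (k - 1) + q ^ (n - 1) * Gq q (n - 1) k :=
  stmt16_general q n k hk hn
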